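/- Let P ⊆ ℝ² be finite, p ∈ P, l ∈ {0,…,5}, and let q ∈ V_l(p) satisfy ‖p − q‖ = min_{r ∈ V_l(p)} ‖p − r‖. Then the set S = {p} ∪ {x ∈ closure(W_l(p)) : ‖x − p‖ ≤ ‖q − p‖} is an l-pie (namely S = p + ‖q − p‖·σ_l) that is empty with respect to P and has both p and q on its boundary. Consequently, every edge of the Yao graph YG(P) is an edge of the Pie Delaunay graph PDG(P). -/

import Mathlib

/- Common geometric setup: the Euclidean plane, wedges `W_l`, bisectors `b_l`,
equilateral triangles `∆_l` and `l`-tri's, circular sectors `σ_l` and `l`-pies,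
and the proximity graphs (Semi-Yao, nearest-neighbor, Equilateral/Pie Delaunay,
Yao) together with Euclidean minimum spanning trees. -/

open Real EuclideanGeometry
open scoped RealInnerProductSpace

noncomputable section

abbrev E : Type := EuclideanSpace ℝ (Fin 2)

/-- The point `(a, b)` in the Euclidean plane. -/
def pt (a b : ℝ) : E := (WithLp.equiv 2 (Fin 2 → ℝ)).symm ![a, b]

/-- The unit vector at polar angle `θ`. -/
def dir (θ : ℝ) : E := pt (Real.cos θ) (Real.sin θ)

/-- The lower boundary angle `(2l-1)π/6` of the `l`-th wedge. -/
def lo (l : Fin 6) : ℝ := (2 * ((l : ℕ) : ℝ) - 1) * π / 6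

/-- The upper boundary angle `(2l+1)π/6` of the `l`-th wedge. -/
def hi (l : Fin 6) : ℝ := (2 * ((l : ℕ) : ℝ) + 1) * π / 6

/-- The half-open wedge `W_l`: all nonzero points whose polar angle (mod `2π`)
lies in `[(2l-1)π/6, (2l+1)π/6)`. -/
def wedge (l : Fin 6) : Set E :=
  {x | x ≠ 0 ∧ ∃ θ : ℝ, lo l ≤ θ ∧ θ < hi l ∧ x = ‖x‖ • dir θ}

/-- `W_l(p)`, the translate of `W_l` with apex `p`. -/
def wedgeAt (l : Fin 6) (p : E) : Set E := {x | x - p ∈ wedge l}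

/-- The unit bisector vector `b_l = (cos(lπ/3), sin(lπ/3))` of `W_l`. -/
def bvec (l : Fin 6) : E := dir (((l : ℕ) : ℝ) * π / 3)

/-- `V_l(p) = P ∩ W_l(p)`. -/
def Vl (P : Finset E) (l : Fin 6) (p : E) : Set E := {x | x ∈ P ∧ x ∈ wedgeAt l p}

/-- The closed equilateral triangle `∆_l` with vertices `0`, `dir ((2l-1)π/6)`,
`dir ((2l+1)π/6)`. -/
def tri (l : Fin 6) : Set E := convexHull ℝ {0, dir (lo l), dir (hi l)}

/-- The vertex set of `∆_l`. -/
def triVerts (l : Fin 6) : Set E := {0, dir (lo l), dir (hi l)}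

/-- The `l`-tri `c + lam • ∆_l`. -/
def lTri (l : Fin 6) (c : E) (lam : ℝ) : Set E := (fun x => c + lam • x) '' tri l

/-- The closed circular sector (piece of pie) `σ_l` of the unit disk. -/
def sector (l : Fin 6) : Set E :=
  {x | ‖x‖ ≤ 1 ∧ (x = 0 ∨ ∃ θ : ℝ, lo l ≤ θ ∧ θ ≤ hi l ∧ x = ‖x‖ • dir θ)}

/-- The `l`-pie `c + lam • σ_l`. -/
def lPie (l : Fin 6) (c : E) (lam : ℝ) : Set E := (fun x => c + lam • x) '' sector l

/-- Directed Semi-Yao graph edge from `a` to `b`: `a ∈ V_l(b)` for some `l` and `a`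
has the minimum `b_l`-coordinate among the points of `V_l(b)`. -/
def SYG (P : Finset E) (a b : E) : Prop :=
  b ∈ P ∧ ∃ l : Fin 6, a ∈ Vl P l b ∧
    ∀ r ∈ Vl P l b, ⟪a - b, bvec l⟫ ≤ ⟪r - b, bvec l⟫

/-- Undirected Semi-Yao graph edge. -/
def SYGu (P : Finset E) (p q : E) : Prop := SYG P p q ∨ SYG P q p

/-- Directed nearest-neighbor graph edge from `a` to `b`: `b ∈ P \ {a}` and
`‖a - b‖ = min_{r ∈ P \ {a}} ‖a - r‖`. -/
def NNG (P : Finset E) (a b : E) : Prop :=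
  a ∈ P ∧ b ∈ P ∧ b ≠ a ∧ ∀ r ∈ P, r ≠ a → ‖a - b‖ ≤ ‖a - r‖

/-- Edge of the Equilateral Delaunay triangulation `EDT_l(P)`: there is an `l`-tri,
empty with respect to `P`, with both endpoints on its boundary. -/
def EDT (P : Finset E) (l : Fin 6) (p q : E) : Prop :=
  p ∈ P ∧ q ∈ P ∧ p ≠ q ∧ ∃ c : E, ∃ lam : ℝ, 0 < lam ∧
    p ∈ frontier (lTri l c lam) ∧ q ∈ frontier (lTri l c lam) ∧
    ∀ r ∈ P, r ∉ interior (lTri l c lam)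

/-- Edge of the Equilateral Delaunay graph `EDG(P) = EDT_0(P) ∪ EDT_1(P)`. -/
def EDG (P : Finset E) (p q : E) : Prop := EDT P 0 p q ∨ EDT P 1 p q

/-- Directed Yao-graph edge from `p` to `q`: `q ∈ V_l(p)` for some `l` and
`‖p - q‖ = min_{r ∈ V_l(p)} ‖p - r‖`. -/
def YG (P : Finset E) (p q : E) : Prop :=
  p ∈ P ∧ ∃ l : Fin 6, q ∈ Vl P l p ∧ ∀ r ∈ Vl P l p, ‖p - q‖ ≤ ‖p - r‖

/-- Edge of the Pie Delaunay triangulation `PDT_l(P)`: there is an `l`-pie, empty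
with respect to `P`, with both endpoints on its boundary. -/
def PDT (P : Finset E) (l : Fin 6) (p q : E) : Prop :=
  p ∈ P ∧ q ∈ P ∧ p ≠ q ∧ ∃ c : E, ∃ lam : ℝ, 0 < lam ∧
    p ∈ frontier (lPie l c lam) ∧ q ∈ frontier (lPie l c lam) ∧
    ∀ r ∈ P, r ∉ interior (lPie l c lam)

/-- Edge of the Pie Delaunay graph `PDG(P) = PDT_0(P) ∪ ⋯ ∪ PDT_5(P)`. -/
def PDG (P : Finset E) (p q : E) : Prop := ∃ l : Fin 6, PDT P l p q

/-- Total Euclidean edge weight of a graph on the points of `P`. -/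
def edgeWeight (P : Finset E) (G : SimpleGraph {x // x ∈ P}) : ℝ :=
  ∑ e ∈ G.edgeSet.toFinite.toFinset,
    Sym2.lift ⟨fun (a b : {x // x ∈ P}) => ‖(a : E) - (b : E)‖,
      fun _ _ => norm_sub_rev _ _⟩ e

/-- `T` is a Euclidean minimum spanning tree of `P`: a spanning tree (connected and
acyclic graph on the vertex set `P`) of minimum total Euclidean edge weight. -/
def IsEMST (P : Finset E) (T : SimpleGraph {x // x ∈ P}) : Prop :=
  T.IsTree ∧ ∀ G : SimpleGraph {x // x ∈ P}, G.IsTree → edgeWeight P T ≤ edgeWeight P G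

/-! The pie `p + ‖q - p‖ • σ_l` is the closed disc of radius `‖q - p‖` about `p` cut by the two
closed half-planes bounding `W_l(p)`, and these half-planes also cut out the closure of `W_l(p)`.
Its interior is the open disc cut by the open half-planes, which lies in the half-open wedge
`W_l(p)`; so a point of `P` there would be a point of `V_l(p)` strictly closer to `p` than `q`.
The apex `p ∉ W_l(p)` and the point `q` at distance exactly `‖q - p‖` lie in the closed pie but
not in its interior, hence on its boundary. -/

open Filter Topology

lemma inner_dir_dir (θ φ : ℝ) : ⟪dir θ, dir φ⟫ = cos (θ - φ) := by
  simp [dir, pt, PiLp.inner_apply, Fin.sum_univ_two, cos_sub, mul_comm]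

lemma norm_dir (θ : ℝ) : ‖dir θ‖ = 1 := by
  simp [EuclideanSpace.norm_eq, dir, pt]

lemma dir_ne_zero (θ : ℝ) : dir θ ≠ 0 :=
  norm_ne_zero_iff.1 (by simp [norm_dir])

lemma exists_eq_norm_smul_dir (x : E) (c : ℝ) :
    ∃ θ ∈ Set.Ioc c (c + 2 * π), x = ‖x‖ • dir θ := by
  set z : ℂ := Complex.orthonormalBasisOneI.repr.symm x
  have hz : ‖x‖ = ‖z‖ := (LinearIsometryEquiv.norm_map _ _).symm
  set θ := toIocMod two_pi_pos c z.arg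
  have hθ : θ = z.arg - toIocDiv two_pi_pos c z.arg • (2 * π) := rfl
  have hre : ‖x‖ * cos θ = x 0 := by
    rw [hθ, cos_periodic.sub_zsmul_eq, hz, Complex.norm_mul_cos_arg]; simp [z]
  have him : ‖x‖ * sin θ = x 1 := by
    rw [hθ, sin_periodic.sub_zsmul_eq, hz, Complex.norm_mul_sin_arg]; simp [z]
  refine ⟨θ, toIocMod_mem_Ioc _ _ _, ?_⟩
  ext i; fin_cases i
  · simp [dir, pt, hre]
  · simp [dir, pt, him]

lemma hi_sub_lo (l : Fin 6) : hi l - lo l = π / 3 := by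
  simp only [hi, lo]; ring

-- The inward unit normals of the two boundary rays of `W_l`.
def loNormal (l : Fin 6) : E := dir (lo l + π / 2)

def hiNormal (l : Fin 6) : E := dir (hi l - π / 2)

lemma inner_loNormal_smul_dir (l : Fin 6) (r θ : ℝ) :
    ⟪loNormal l, r • dir θ⟫ = r * sin (θ - lo l) := by
  rw [loNormal, inner_smul_right, inner_dir_dir, ← cos_pi_div_two_sub]; ring_nf

lemma inner_hiNormal_smul_dir (l : Fin 6) (r θ : ℝ) :
    ⟪hiNormal l, r • dir θ⟫ = r * sin (hi l - θ) := by
  rw [hiNormal, inner_smul_right, inner_dir_dir, ← cos_pi_div_two_sub, ← cos_neg]; ring_nf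

def closedWedge (l : Fin 6) : Set E := {x | 0 ≤ ⟪loNormal l, x⟫ ∧ 0 ≤ ⟪hiNormal l, x⟫}

lemma mem_Icc_of_sin_nonneg (l : Fin 6) {θ : ℝ} (hθ : θ ∈ Set.Ioc (lo l - π) (lo l + π))
    (hlo : 0 ≤ sin (θ - lo l)) (hhi : 0 ≤ sin (hi l - θ)) : θ ∈ Set.Icc (lo l) (hi l) := by
  have := hi_sub_lo l
  constructor
  · by_contra! h
    linarith [sin_neg_of_neg_of_neg_pi_lt (by linarith : θ - lo l < 0) (by linarith [hθ.1])]
  · by_contra! h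
    linarith [sin_neg_of_neg_of_neg_pi_lt (by linarith : hi l - θ < 0)
      (by linarith [hθ.2, pi_pos])]

lemma mem_closedWedge_iff (l : Fin 6) (x : E) :
    x ∈ closedWedge l ↔ x = 0 ∨ ∃ θ, lo l ≤ θ ∧ θ ≤ hi l ∧ x = ‖x‖ • dir θ := by
  constructor
  · rintro ⟨hlo, hhi⟩
    rcases eq_or_ne x 0 with hx0 | hx0
    · exact Or.inl hx0
    obtain ⟨θ, hθ, hx⟩ := exists_eq_norm_smul_dir x (lo l - π)
    have hpos : 0 < ‖x‖ := norm_pos_iff.2 hx0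
    rw [hx, inner_loNormal_smul_dir, mul_nonneg_iff_of_pos_left hpos] at hlo
    rw [hx, inner_hiNormal_smul_dir, mul_nonneg_iff_of_pos_left hpos] at hhi
    have hθ' : θ ∈ Set.Ioc (lo l - π) (lo l + π) := by
      convert hθ using 2; ring
    obtain ⟨h1, h2⟩ := mem_Icc_of_sin_nonneg l hθ' hlo hhi
    exact Or.inr ⟨θ, h1, h2, hx⟩
  · have := hi_sub_lo l
    rintro (rfl | ⟨θ, h1, h2, hx⟩)
    · simp [closedWedge]
    rw [hx]
    refine ⟨?_, ?_⟩
    · rw [inner_loNormal_smul_dir]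
      exact mul_nonneg (norm_nonneg x) (sin_nonneg_of_nonneg_of_le_pi (by linarith)
        (by linarith [pi_pos]))
    · rw [inner_hiNormal_smul_dir]
      exact mul_nonneg (norm_nonneg x) (sin_nonneg_of_nonneg_of_le_pi (by linarith)
        (by linarith [pi_pos]))

lemma wedge_eq (l : Fin 6) :
    wedge l = {x | 0 ≤ ⟪loNormal l, x⟫ ∧ 0 < ⟪hiNormal l, x⟫} := by
  have := hi_sub_lo l
  ext x
  constructor
  · rintro ⟨hx0, θ, h1, h2, hx⟩
    refine ⟨((mem_closedWedge_iff l x).2 (Or.inr ⟨θ, h1, h2.le, hx⟩)).1, ?_⟩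
    rw [hx, inner_hiNormal_smul_dir]
    exact mul_pos (norm_pos_iff.2 hx0)
      (sin_pos_of_pos_of_lt_pi (by linarith) (by linarith [pi_pos]))
  · rintro ⟨hlo, hhi⟩
    have hx0 : x ≠ 0 := by rintro rfl; simp at hhi
    rcases (mem_closedWedge_iff l x).1 ⟨hlo, hhi.le⟩ with h | ⟨θ, h1, h2, hx⟩
    · exact absurd h hx0
    refine ⟨hx0, θ, h1, lt_of_le_of_ne h2 ?_, hx⟩
    rintro rfl
    rw [hx, inner_hiNormal_smul_dir, sub_self, sin_zero, mul_zero] at hhi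
    exact lt_irrefl 0 hhi

lemma isClosed_closedWedge (l : Fin 6) : IsClosed (closedWedge l) := by
  unfold closedWedge
  simp only [Set.ofPred_and]
  exact (isClosed_le continuous_const (continuous_const.inner continuous_id)).inter
    (isClosed_le continuous_const (continuous_const.inner continuous_id))

lemma smul_mem_closedWedge (l : Fin 6) {r : ℝ} {x : E} (hr : 0 ≤ r) (hx : x ∈ closedWedge l) :
    r • x ∈ closedWedge l := by
  simp only [closedWedge, Set.mem_ofPred_eq, inner_smul_right] at hx ⊢
  exact ⟨mul_nonneg hr hx.1, mul_nonneg hr hx.2⟩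

lemma zero_mem_closedWedge (l : Fin 6) : (0 : E) ∈ closedWedge l := by
  simp [closedWedge]

lemma wedge_subset_closedWedge (l : Fin 6) : wedge l ⊆ closedWedge l := by
  rw [wedge_eq]; exact fun x hx => ⟨hx.1, hx.2.le⟩

lemma closure_wedge (l : Fin 6) : closure (wedge l) = closedWedge l := by
  refine (closure_minimal (wedge_subset_closedWedge l) (isClosed_closedWedge l)).antisymm ?_
  intro x hx
  -- push `x` slightly along the bisector `b_l`, which makes angle `π / 3` with both normals
  have hlo : ⟪loNormal l, bvec l⟫ = 1 / 2 := by
    rw [loNormal, bvec, inner_dir_dir, ← cos_pi_div_three]; congr 1; simp only [lo]; ring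
  have hhi : ⟪hiNormal l, bvec l⟫ = 1 / 2 := by
    rw [hiNormal, bvec, inner_dir_dir, ← cos_pi_div_three, ← cos_neg]
    congr 1; simp only [hi]; ring
  have hmem : ∀ t : ℝ, 0 < t → x + t • bvec l ∈ wedge l := fun t ht => by
    rw [wedge_eq]
    simp only [Set.mem_ofPred_eq, inner_add_right, inner_smul_right, hlo, hhi]
    exact ⟨by linarith [hx.1], by linarith [hx.2]⟩
  have htend : Tendsto (fun t : ℝ => x + t • bvec l) (𝓝[>] 0) (𝓝 x) := by
    have : Continuous fun t : ℝ => x + t • bvec l := by fun_prop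
    simpa using (this.tendsto 0).mono_left nhdsWithin_le_nhds
  exact mem_closure_of_tendsto htend (eventually_nhdsWithin_of_forall hmem)

lemma interior_setOf_inner_nonneg {F : Type*} [NormedAddCommGroup F] [InnerProductSpace ℝ F]
    {w : F} (hw : w ≠ 0) : interior {x : F | 0 ≤ ⟪w, x⟫} = {x | 0 < ⟪w, x⟫} := by
  have hf : innerSL ℝ w ≠ 0 := by
    rw [← norm_ne_zero_iff, innerSL_apply_norm]; exact norm_ne_zero_iff.2 hw
  rw [show {x : F | 0 ≤ ⟪w, x⟫} = innerSL ℝ w ⁻¹' Set.Ici 0 from rfl,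
    ← ((innerSL ℝ w).isOpenMap_of_ne_zero hf).preimage_interior_eq_interior_preimage
      (innerSL ℝ w).continuous, interior_Ici]
  rfl

lemma interior_closedWedge_subset (l : Fin 6) : interior (closedWedge l) ⊆ wedge l := by
  rw [closedWedge, Set.ofPred_and, interior_inter,
    interior_setOf_inner_nonneg (w := loNormal l) (dir_ne_zero _),
    interior_setOf_inner_nonneg (w := hiNormal l) (dir_ne_zero _), wedge_eq]
  exact fun x hx => ⟨hx.1.le, hx.2⟩

lemma sector_eq (l : Fin 6) : sector l = Metric.closedBall 0 1 ∩ closedWedge l := by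
  ext x
  simp [sector, mem_closedWedge_iff]

lemma lPie_eq (l : Fin 6) (c : E) {lam : ℝ} (hlam : 0 < lam) :
    lPie l c lam = Metric.closedBall c lam ∩ (· - c) ⁻¹' closedWedge l := by
  ext y
  simp only [lPie, sector_eq, Set.mem_image, Set.mem_inter_iff, Metric.mem_closedBall,
    dist_eq_norm, sub_zero, Set.mem_preimage]
  constructor
  · rintro ⟨x, ⟨hx1, hx2⟩, rfl⟩
    rw [add_sub_cancel_left, norm_smul, norm_of_nonneg hlam.le]
    exact ⟨mul_le_of_le_one_right hlam.le hx1, smul_mem_closedWedge l hlam.le hx2⟩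
  · rintro ⟨hy1, hy2⟩
    refine ⟨lam⁻¹ • (y - c), ⟨?_, smul_mem_closedWedge l (by positivity) hy2⟩, ?_⟩
    · rw [norm_smul, norm_of_nonneg (by positivity)]
      exact inv_mul_le_one_of_le₀ hy1 hlam.le
    · rw [smul_inv_smul₀ hlam.ne', add_sub_cancel]

lemma isClosed_lPie (l : Fin 6) (c : E) {lam : ℝ} (hlam : 0 < lam) : IsClosed (lPie l c lam) := by
  rw [lPie_eq l c hlam]
  exact Metric.isClosed_closedBall.inter
    ((isClosed_closedWedge l).preimage (continuous_id.sub continuous_const))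

lemma interior_lPie_subset (l : Fin 6) (c : E) {lam : ℝ} (hlam : 0 < lam) :
    interior (lPie l c lam) ⊆ Metric.ball c lam ∩ (· - c) ⁻¹' wedge l := by
  rw [lPie_eq l c hlam, interior_inter, interior_closedBall c hlam.ne']
  refine Set.inter_subset_inter_right _ ?_
  rw [show (· - c) ⁻¹' closedWedge l = Homeomorph.subRight c ⁻¹' closedWedge l from rfl,
    ← Homeomorph.preimage_interior]
  exact Set.preimage_mono (interior_closedWedge_subset l)

lemma closure_wedgeAt (l : Fin 6) (p : E) :
    closure (wedgeAt l p) = (· - p) ⁻¹' closedWedge l := by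
  rw [show wedgeAt l p = Homeomorph.subRight p ⁻¹' wedge l from rfl,
    ← Homeomorph.preimage_closure, closure_wedge]
  rfl

lemma singleton_union_closure_wedgeAt_eq_lPie (l : Fin 6) (p : E) {lam : ℝ} (hlam : 0 < lam) :
    {p} ∪ {x ∈ closure (wedgeAt l p) | ‖x - p‖ ≤ lam} = lPie l p lam := by
  rw [lPie_eq l p hlam, closure_wedgeAt]
  ext x
  simp only [Set.mem_union, Set.mem_singleton_iff, Set.mem_ofPred_eq, Set.mem_inter_iff,
    Set.mem_preimage, Metric.mem_closedBall, dist_eq_norm]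
  constructor
  · rintro (rfl | ⟨hx, hn⟩)
    · simp [hlam.le, zero_mem_closedWedge]
    · exact ⟨hn, hx⟩
  · exact fun ⟨hn, hx⟩ => Or.inr ⟨hx, hn⟩

lemma apex_mem_frontier_lPie (l : Fin 6) (c : E) {lam : ℝ} (hlam : 0 < lam) :
    c ∈ frontier (lPie l c lam) := by
  rw [(isClosed_lPie l c hlam).frontier_eq, lPie_eq l c hlam]
  refine ⟨⟨by simp [hlam.le], by simp [zero_mem_closedWedge]⟩, fun h => ?_⟩
  rw [← lPie_eq l c hlam] at h
  exact (interior_lPie_subset l c hlam h).2.1 (sub_self c)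

lemma mem_frontier_lPie_of_norm_eq (l : Fin 6) (c : E) {lam : ℝ} (hlam : 0 < lam) {y : E}
    (hy : y - c ∈ closedWedge l) (hn : ‖y - c‖ = lam) : y ∈ frontier (lPie l c lam) := by
  rw [(isClosed_lPie l c hlam).frontier_eq]
  refine ⟨by rw [lPie_eq l c hlam]; exact ⟨by simp [dist_eq_norm, hn], hy⟩, fun h => ?_⟩
  have := (interior_lPie_subset l c hlam h).1
  rw [Metric.mem_ball, dist_eq_norm, hn] at this
  exact lt_irrefl lam this

lemma not_mem_interior_lPie_of_nearest {P : Finset E} {l : Fin 6} {p q : E}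
    (hq : q ∈ Vl P l p) (hmin : ∀ r ∈ Vl P l p, ‖p - q‖ ≤ ‖p - r‖) :
    ∀ r ∈ P, r ∉ interior (lPie l p ‖q - p‖) := by
  intro r hr hint
  obtain ⟨hball, hw⟩ := interior_lPie_subset l p (norm_pos_iff.2 hq.2.1) hint
  rw [Metric.mem_ball, dist_eq_norm] at hball
  have := hmin r ⟨hr, hw⟩
  rw [norm_sub_rev p q, norm_sub_rev p r] at this
  linarith

lemma PDT_of_nearest {P : Finset E} {l : Fin 6} {p q : E} (hp : p ∈ P)
    (hq : q ∈ Vl P l p) (hmin : ∀ r ∈ Vl P l p, ‖p - q‖ ≤ ‖p - r‖) : PDT P l p q :=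
  have hlam : 0 < ‖q - p‖ := norm_pos_iff.2 hq.2.1
  ⟨hp, hq.1, (sub_ne_zero.1 hq.2.1).symm, p, ‖q - p‖, hlam, apex_mem_frontier_lPie l p hlam,
    mem_frontier_lPie_of_norm_eq l p hlam (wedge_subset_closedWedge l hq.2) rfl,
    not_mem_interior_lPie_of_nearest hq hmin⟩

lemma YG.PDG {P : Finset E} {a b : E} (h : YG P a b) : PDG P a b :=
  let ⟨ha, l, hb, hmin⟩ := h
  ⟨l, PDT_of_nearest ha hb hmin⟩

theorem yao_edge_gives_empty_lPie_general
    (P : Finset E) (p q : E) (l : Fin 6)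
    (hq : q ∈ Vl P l p) (hmin : ∀ r ∈ Vl P l p, ‖p - q‖ ≤ ‖p - r‖) :
    ({p} ∪ {x ∈ closure (wedgeAt l p) | ‖x - p‖ ≤ ‖q - p‖}) = lPie l p ‖q - p‖ ∧
    (∀ r ∈ P, r ∉ interior (lPie l p ‖q - p‖)) ∧
    p ∈ frontier (lPie l p ‖q - p‖) ∧ q ∈ frontier (lPie l p ‖q - p‖) ∧
    ∀ (P' : Finset E) (a b : E), YG P' a b → PDG P' a b := by
  have hlam : 0 < ‖q - p‖ := norm_pos_iff.2 hq.2.1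
  exact ⟨singleton_union_closure_wedgeAt_eq_lPie l p hlam,
    not_mem_interior_lPie_of_nearest hq hmin,
    apex_mem_frontier_lPie l p hlam,
    mem_frontier_lPie_of_norm_eq l p hlam (wedge_subset_closedWedge l hq.2) rfl,
    fun _ _ _ h => h.PDG⟩

/-- if `q ∈ V_l(p)` is nearest to `p` in the wedge `W_l(p)`, then
`S = {p} ∪ {x ∈ closure (W_l(p)) : ‖x - p‖ ≤ ‖q - p‖}` is the `l`-pie `p + ‖q - p‖ σ_l`,
it is empty with respect to `P`, and has `p` and `q` on its boundary. Consequently every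
edge of the Yao graph is an edge of the Pie Delaunay graph. -/
theorem yao_edge_gives_empty_lPie
    (P : Finset E) (p q : E) (hp : p ∈ P) (l : Fin 6)
    (hq : q ∈ Vl P l p) (hmin : ∀ r ∈ Vl P l p, ‖p - q‖ ≤ ‖p - r‖) :
    ({p} ∪ {x ∈ closure (wedgeAt l p) | ‖x - p‖ ≤ ‖q - p‖}) = lPie l p ‖q - p‖ ∧
    (∀ r ∈ P, r ∉ interior (lPie l p ‖q - p‖)) ∧
    p ∈ frontier (lPie l p ‖q - p‖) ∧ q ∈ frontier (lPie l p ‖q - p‖) ∧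
    ∀ (P' : Finset E) (a b : E), YG P' a b → PDG P' a b :=
  yao_edge_gives_empty_lPie_general P p q l hq hmin
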